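/- The Milnor number of the Brieskorn-Pham singularity f = x_1^{p_1} + ... + x_n^{p_n} equals (p_1 - 1)(p_2 - 1)···(p_n - 1); that is, the dimension over ℂ of the Jacobian ring ℂ[x_1,...,x_n]/(∂f/∂x_1, ..., ∂f/∂x_n) is ∏_{k=1}^n (p_k - 1). -/

import Mathlib

/-!
Each partial derivative of `f` is `p_i X_i^(p_i - 1)`, a unit multiple of a pure power, so the
Jacobian ideal is the monomial ideal `(X_1^(p_1 - 1), …, X_n^(p_n - 1))`. A polynomial lies in
this ideal exactly when each of its monomials is divisible by some `X_i^(p_i - 1)`, so the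
monomials `X^d` with `d_i < p_i - 1` for all `i` project to a basis of the quotient.
-/

open MvPolynomial

theorem Ideal.span_range_isUnit_mul {α ι : Type*} [CommSemiring α] {c : ι → α}
    (hc : ∀ i, IsUnit (c i)) (g : ι → α) :
    Ideal.span (Set.range fun i => c i * g i) = Ideal.span (Set.range g) := by
  apply le_antisymm <;> rw [Ideal.span_le] <;> rintro _ ⟨i, rfl⟩
  · exact Ideal.mul_mem_left _ _ (Ideal.subset_span ⟨i, rfl⟩)
  · rw [← (hc i).unit.inv_mul_cancel_left (g i)]
    exact Ideal.mul_mem_left _ _ (Ideal.subset_span ⟨i, rfl⟩)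

theorem Nat.card_subtype_finsupp_lt {σ : Type*} [Fintype σ] (m : σ → ℕ) :
    Nat.card {d : σ →₀ ℕ // ∀ i, d i < m i} = ∏ i, m i := by
  let e : {d : σ →₀ ℕ // ∀ i, d i < m i} ≃ ∀ i, Fin (m i) :=
    (Finsupp.equivFunOnFinite.subtypeEquiv fun _ => Iff.rfl).trans
      ((Equiv.subtypePiEquivPi).trans (Equiv.piCongrRight fun i => Fin.equivSubtype.symm))
  simp only [Nat.card_congr e, Nat.card_pi, Nat.card_fin]

namespace MvPolynomial

variable {σ R : Type*}

section CommSemiring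

variable [CommSemiring R]

theorem pderiv_sum_X_pow [Fintype σ] (p : σ → ℕ) (i : σ) :
    pderiv i (∑ j, X j ^ p j : MvPolynomial σ R) =
      (p i : MvPolynomial σ R) * X i ^ (p i - 1) := by
  rw [map_sum, Finset.sum_eq_single_of_mem i (Finset.mem_univ i)]
  · rw [pderiv_pow, pderiv_X_self, mul_one]
  · intro j _ hji
    rw [pderiv_pow, pderiv_X_of_ne hji, mul_zero]

theorem mem_ideal_span_X_pow_iff (m : σ → ℕ) {x : MvPolynomial σ R} :
    x ∈ Ideal.span (Set.range fun i => (X i : MvPolynomial σ R) ^ m i) ↔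
      ∀ d ∈ x.support, ∃ i, m i ≤ d i := by
  have hgen : (Set.range fun i => (X i : MvPolynomial σ R) ^ m i) =
      (fun s => monomial s (1 : R)) '' Set.range fun i => Finsupp.single i (m i) := by
    rw [← Set.range_comp]
    simp only [Function.comp_def, X_pow_eq_monomial]
  simp [hgen, mem_ideal_span_monomial_image, Finsupp.single_le_iff]

theorem restrictScalars_ideal_span_X_pow (m : σ → ℕ) :
    (Ideal.span (Set.range fun i => (X i : MvPolynomial σ R) ^ m i)).restrictScalars R =
      restrictSupport R {d | ∃ i, m i ≤ d i} := by
  ext x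
  rw [Submodule.restrictScalars_mem, mem_ideal_span_X_pow_iff, mem_restrictSupport_iff]
  rfl

theorem isCompl_restrictSupport_compl (s : Set (σ →₀ ℕ)) :
    IsCompl (restrictSupport R s) (restrictSupport R sᶜ) := by
  constructor
  · rw [Submodule.disjoint_def]
    intro x hs hsc
    rw [mem_restrictSupport_iff] at hs hsc
    ext d
    by_contra hd
    exact hsc (mem_support_iff.2 hd) (hs (mem_support_iff.2 hd))
  · rw [codisjoint_iff, restrictSupport_eq_span, restrictSupport_eq_span, ← Submodule.span_union,
      ← Set.image_union, Set.union_compl_self, ← restrictSupport_eq_span, restrictSupport_univ]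

end CommSemiring

theorem finrank_quotient_ideal_span_X_pow {K : Type*} [Field K] [Fintype σ] (m : σ → ℕ) :
    Module.finrank K
      (MvPolynomial σ K ⧸ Ideal.span (Set.range fun i => (X i : MvPolynomial σ K) ^ m i)) =
      ∏ i, m i := by
  set I := Ideal.span (Set.range fun i => (X i : MvPolynomial σ K) ^ m i)
  set S := {d : σ →₀ ℕ | ∀ i, d i < m i}
  have hI : I.restrictScalars K = restrictSupport K Sᶜ := by
    rw [restrictScalars_ideal_span_X_pow]
    congr 1
    ext d
    simp [S]
  calc Module.finrank K (MvPolynomial σ K ⧸ I)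
      = Module.finrank K (MvPolynomial σ K ⧸ I.restrictScalars K) :=
        (Submodule.Quotient.restrictScalarsEquiv K I).finrank_eq.symm
    _ = Module.finrank K (restrictSupport K S) := by
        rw [hI]
        exact (Submodule.quotientEquivOfIsCompl _ _
          (isCompl_restrictSupport_compl S).symm).finrank_eq
    _ = Nat.card S := Module.finrank_eq_nat_card_basis (basisRestrictSupport K S)
    _ = ∏ i, m i := Nat.card_subtype_finsupp_lt m

end MvPolynomial

/-- The Milnor number of the Brieskorn-Pham singularity
`f = x_1^{p_1} + ... + x_n^{p_n}` equals `(p_1 - 1) ⋯ (p_n - 1)`: the Jacobian ring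
`ℂ[x_1, ..., x_n]/(∂f/∂x_1, ..., ∂f/∂x_n)` has dimension `∏ (p_k - 1)` over `ℂ`. -/
theorem stmt10 (n : ℕ) (p : Fin n → ℕ) (hp : ∀ i, 2 ≤ p i)
    (f : MvPolynomial (Fin n) ℂ) (hf : f = ∑ i, X i ^ p i) :
    Module.finrank ℂ
      (MvPolynomial (Fin n) ℂ ⧸
        Ideal.span (Set.range fun i : Fin n => pderiv i f)) =
      ∏ i, (p i - 1) := by
  have hunit : ∀ i, IsUnit (p i : MvPolynomial (Fin n) ℂ) := fun i => by
    rw [← map_natCast C]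
    exact (isUnit_iff_ne_zero.2 (Nat.cast_ne_zero.2 (by have := hp i; omega))).map C
  have hjac : (fun i => pderiv i f) = fun i => (p i : MvPolynomial (Fin n) ℂ) * X i ^ (p i - 1) :=
    funext fun i => hf ▸ pderiv_sum_X_pow p i
  rw [hjac, Ideal.span_range_isUnit_mul hunit, finrank_quotient_ideal_span_X_pow]
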